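/- Let (x^k)_{k ≥ −1} be a cDCA sequence, and assume h is differentiable with ∇h being L_h-Lipschitz continuous on the convex hull of {x^k : k ≥ −1}. Then for every k ≥ 0 there exists ξ^{k+1} ∈ ∂g(x^{k+1}) such that the vector w^{k+1} := ∇f(x^{k+1}) + ξ^{k+1} − ∇h(x^{k+1}) satisfies ‖w^{k+1}‖ ≤ ((1 − μλ)δ/μ)‖x^k − x^{k−1}‖ + (λ + L_h)‖x^{k+1} − x^k‖. -/

import Mathlib

open Set Filter Topology
open scoped InnerProductSpace

noncomputable section

abbrev Euc (n : ℕ) := EuclideanSpace ℝ (Fin n)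

/-- The subdifferential of an extended-real-valued function `g` at `u`. -/
def SubdiffE {n : ℕ} (g : Euc n → EReal) (u : Euc n) : Set (Euc n) :=
  {ξ | ∀ z, g u + ((⟪ξ, z - u⟫_ℝ : ℝ) : EReal) ≤ g z}

/-- The subdifferential of a real-valued function `h` at `u`. -/
def SubdiffR {n : ℕ} (h : Euc n → ℝ) (u : Euc n) : Set (Euc n) :=
  {ξ | ∀ z, h u + ⟪ξ, z - u⟫_ℝ ≤ h z}

/-- Convexity for extended-real-valued functions. -/
def ConvexEReal {n : ℕ} (g : Euc n → EReal) : Prop :=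
  ∀ x y : Euc n, ∀ a b : ℝ, 0 ≤ a → 0 ≤ b → a + b = 1 →
    g (a • x + b • y) ≤ (a : EReal) * g x + (b : EReal) * g y

/-- `g` is proper: nowhere `⊥` and somewhere finite. -/
def ProperE {n : ℕ} (g : Euc n → EReal) : Prop :=
  (∀ x, g x ≠ ⊥) ∧ ∃ x, g x ≠ ⊤

/-- `P` is the proximal mapping of `g`: for every `α > 0` and every `x`, `P α x` is
the unique minimizer over `ℝⁿ` of `y ↦ g y + (1/(2α)) ‖x - y‖²`. -/
def IsProx {n : ℕ} (g : Euc n → EReal) (P : ℝ → Euc n → Euc n) : Prop :=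
  ∀ α : ℝ, 0 < α → ∀ x p, P α x = p ↔
    (∀ y, g p + ((1/(2*α) * ‖x - p‖^2 : ℝ) : EReal) ≤ g y + ((1/(2*α) * ‖x - y‖^2 : ℝ) : EReal))

/-- A cDCA sequence, indexed so that `x 0 = x⁻¹` and `x (k+1) = xᵏ` for `k ≥ 0`:
for every `k ≥ 0` there exist `ηᵏ ∈ ∂h(xᵏ)` and `yᵏ` with
`x^{k+1} = Prox_{μg}((1-μλ)yᵏ - μ∇f(yᵏ) + μλxᵏ + μηᵏ)` and
`‖x^{k+1} - yᵏ‖ ≤ δ‖x^{k-1} - xᵏ‖`. -/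
def IsCDCA {n : ℕ} (f' : Euc n → Euc n) (h : Euc n → ℝ) (P : ℝ → Euc n → Euc n)
    (lam mu δ : ℝ) (x : ℕ → Euc n) : Prop :=
  ∀ k : ℕ, ∃ η ∈ SubdiffR h (x (k+1)), ∃ y,
    x (k+2) = P mu ((1 - mu*lam) • y - mu • f' y + (mu*lam) • x (k+1) + mu • η) ∧
    ‖x (k+2) - y‖ ≤ δ * ‖x k - x (k+1)‖

/-!
The subgradient is `ξ = μ⁻¹ (v - x^{k+1})`, read off the optimality condition of the proximal step
at the point `v` it was applied to, and the subgradient `η` of the differentiable `h` is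
`∇h(xᵏ)`. Since `1 - μλ = μ L_f / 2`, the vector `w^{k+1}` then splits as
`(L_f/2) (T yᵏ - T x^{k+1}) + λ (xᵏ - x^{k+1}) + (∇h(xᵏ) - ∇h(x^{k+1}))` with
`T = id - (2/L_f) ∇f`. By the Baillon–Haddad theorem `∇f` is `1/L_f`-cocoercive, so `T` is
nonexpansive, and the first term is bounded through `‖yᵏ - x^{k+1}‖ ≤ δ ‖x^{k-1} - xᵏ‖`.
-/

section SmoothConvex

variable {E : Type*} [NormedAddCommGroup E] [InnerProductSpace ℝ E] [CompleteSpace E]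
  {f : E → ℝ} {f' : E → E} {L : ℝ}

theorem HasGradientAt.hasDerivAt_add_smul {g a d : E} {t : ℝ} (hf : HasGradientAt f g (a + t • d)) :
    HasDerivAt (fun s : ℝ => f (a + s • d)) ⟪g, d⟫_ℝ t := by
  have hline : HasDerivAt (fun s : ℝ => a + s • d) d t := by
    simpa using ((hasDerivAt_id t).smul_const d).const_add a
  exact hf.hasFDerivAt.comp_hasDerivAt t hline

theorem ConvexOn.add_inner_le_of_hasGradientAt {g b : E} (hf : ConvexOn ℝ univ f)
    (hg : HasGradientAt f g b) (z : E) : f b + ⟪g, z - b⟫_ℝ ≤ f z := by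
  have hline := hf.comp_affineMap (AffineMap.lineMap b z)
  have hcomp : f ∘ AffineMap.lineMap b z = fun t : ℝ => f (b + t • (z - b)) := by
    ext t
    simp [AffineMap.lineMap_apply_module', add_comm]
  rw [preimage_univ, hcomp] at hline
  have hd : HasDerivAt (fun t : ℝ => f (b + t • (z - b))) ⟪g, z - b⟫_ℝ 0 :=
    HasGradientAt.hasDerivAt_add_smul (by simpa using hg)
  have := hline.le_slope_of_hasDerivAt (mem_univ 0) (mem_univ 1) zero_lt_one hd
  simp only [slope_def_field, one_smul, zero_smul, add_zero, sub_zero, div_one,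
    add_sub_cancel] at this
  linarith

theorem HasGradientAt.eq_of_forall_add_inner_le {h : E → ℝ} {g η u : E} (hg : HasGradientAt h g u)
    (hη : ∀ z, h u + ⟪η, z - u⟫_ℝ ≤ h z) : η = g := by
  set d := g - η
  have hmin : IsLocalMin (fun t : ℝ => h (u + t • d) - t * ⟪η, d⟫_ℝ) 0 := by
    refine Filter.Eventually.of_forall fun t => ?_
    have := hη (u + t • d)
    simp only [add_sub_cancel_left, inner_smul_right] at this
    simp only [zero_smul, add_zero, zero_mul, sub_zero]
    linarith
  have hderiv : HasDerivAt (fun t : ℝ => h (u + t • d) - t * ⟪η, d⟫_ℝ) (⟪g, d⟫_ℝ - ⟪η, d⟫_ℝ) 0 :=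
    (HasGradientAt.hasDerivAt_add_smul (by simpa using hg)).sub (hasDerivAt_mul_const _)
  have := hmin.hasDerivAt_eq_zero hderiv
  rw [← inner_sub_left, inner_self_eq_zero, sub_eq_zero] at this
  exact this.symm

theorem le_add_inner_add_of_lipschitz_gradient (hf : ∀ z, HasGradientAt f (f' z) z)
    (hlip : ∀ z w, ‖f' z - f' w‖ ≤ L * ‖z - w‖) (a b : E) :
    f b ≤ f a + ⟪f' a, b - a⟫_ℝ + L / 2 * ‖b - a‖ ^ 2 := by
  set d := b - a
  let ψ : ℝ → ℝ := fun t => f (a + t • d) - t * ⟪f' a, d⟫_ℝ - L / 2 * ‖d‖ ^ 2 * t ^ 2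
  have hψ : ∀ t, HasDerivAt ψ (⟪f' (a + t • d), d⟫_ℝ - ⟪f' a, d⟫_ℝ - L * ‖d‖ ^ 2 * t) t := by
    intro t
    have := (((hf (a + t • d)).hasDerivAt_add_smul).sub (hasDerivAt_mul_const ⟪f' a, d⟫_ℝ)).sub
      ((hasDerivAt_pow 2 t).const_mul (L / 2 * ‖d‖ ^ 2))
    exact this.congr_deriv (by push_cast; ring)
  have hanti : AntitoneOn ψ (Icc 0 1) := by
    refine antitoneOn_of_hasDerivWithinAt_nonpos (convex_Icc 0 1)
      (HasDerivAt.continuousOn fun t _ => hψ t) (fun t _ => (hψ t).hasDerivWithinAt) ?_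
    intro t ht
    rw [interior_Icc] at ht
    suffices ⟪f' (a + t • d), d⟫_ℝ - ⟪f' a, d⟫_ℝ ≤ L * ‖d‖ ^ 2 * t by linarith
    calc ⟪f' (a + t • d), d⟫_ℝ - ⟪f' a, d⟫_ℝ = ⟪f' (a + t • d) - f' a, d⟫_ℝ :=
          (inner_sub_left ..).symm
      _ ≤ ‖f' (a + t • d) - f' a‖ * ‖d‖ := real_inner_le_norm _ _
      _ ≤ L * ‖t • d‖ * ‖d‖ := by
        gcongr
        simpa using hlip (a + t • d) a
      _ = L * ‖d‖ ^ 2 * t := by rw [norm_smul, Real.norm_of_nonneg ht.1.le]; ring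
  have := hanti (left_mem_Icc.2 zero_le_one) (right_mem_Icc.2 zero_le_one) zero_le_one
  simp only [ψ, zero_smul, add_zero, one_smul, zero_mul, sub_zero, one_mul, one_pow,
    mul_one, ne_eq, OfNat.ofNat_ne_zero, not_false_eq_true, zero_pow, d, add_sub_cancel] at this
  linarith

theorem ConvexOn.norm_sub_gradient_sq_div_le (hL : 0 < L) (hconv : ConvexOn ℝ univ f)
    (hf : ∀ z, HasGradientAt f (f' z) z) (hlip : ∀ z w, ‖f' z - f' w‖ ≤ L * ‖z - w‖) (u v : E) :
    ‖f' u - f' v‖ ^ 2 / (2 * L) ≤ f u - f v - ⟪f' v, u - v⟫_ℝ := by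
  set g := f' u - f' v
  -- the supporting hyperplane at `v` and the descent bound at `u`, both evaluated at `u - g / L`
  set w := u - L⁻¹ • g
  have hsupport := hconv.add_inner_le_of_hasGradientAt (hf v) w
  have hdescent := le_add_inner_add_of_lipschitz_gradient hf hlip u w
  have hwv : w - v = (u - v) - L⁻¹ • g := sub_right_comm u _ v
  have hwu : w - u = -(L⁻¹ • g) := by simp [w]
  rw [hwv, inner_sub_right, inner_smul_right] at hsupport
  rw [hwu, inner_neg_right, inner_smul_right, norm_neg, norm_smul, Real.norm_of_nonneg
    (inv_nonneg.2 hL.le)] at hdescent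
  have hgg : L⁻¹ * ⟪f' u, g⟫_ℝ - L⁻¹ * ⟪f' v, g⟫_ℝ = L⁻¹ * ‖g‖ ^ 2 := by
    rw [← mul_sub, ← inner_sub_left, real_inner_self_eq_norm_sq]
  have hfinal : L / 2 * (L⁻¹ * ‖g‖) ^ 2 - L⁻¹ * ‖g‖ ^ 2 = -(‖g‖ ^ 2 / (2 * L)) := by
    field_simp
    ring
  linarith

theorem ConvexOn.norm_sub_gradient_sq_div_le_inner (hL : 0 < L) (hconv : ConvexOn ℝ univ f)
    (hf : ∀ z, HasGradientAt f (f' z) z) (hlip : ∀ z w, ‖f' z - f' w‖ ≤ L * ‖z - w‖) (a b : E) :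
    ‖f' a - f' b‖ ^ 2 / L ≤ ⟪f' a - f' b, a - b⟫_ℝ := by
  have hab := hconv.norm_sub_gradient_sq_div_le hL hf hlip a b
  have hba := hconv.norm_sub_gradient_sq_div_le hL hf hlip b a
  rw [norm_sub_rev] at hba
  have hsplit : ⟪f' a - f' b, a - b⟫_ℝ = -⟪f' b, a - b⟫_ℝ - ⟪f' a, b - a⟫_ℝ := by
    simp only [inner_sub_left, inner_sub_right]
    ring
  have hhalf : ‖f' a - f' b‖ ^ 2 / L = 2 * (‖f' a - f' b‖ ^ 2 / (2 * L)) := by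
    field_simp
  linarith

theorem ConvexOn.norm_sub_smul_gradient_sub_le (hL : 0 < L) (hconv : ConvexOn ℝ univ f)
    (hf : ∀ z, HasGradientAt f (f' z) z) (hlip : ∀ z w, ‖f' z - f' w‖ ≤ L * ‖z - w‖)
    {t : ℝ} (ht₀ : 0 ≤ t) (ht : t ≤ 2 / L) (a b : E) :
    ‖(a - b) - t • (f' a - f' b)‖ ≤ ‖a - b‖ := by
  have hco := hconv.norm_sub_gradient_sq_div_le_inner hL hf hlip a b
  refine (sq_le_sq₀ (norm_nonneg _) (norm_nonneg _)).1 ?_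
  rw [norm_sub_sq_real, inner_smul_right, norm_smul, Real.norm_of_nonneg ht₀, real_inner_comm]
  have hgap : 0 ≤ t * (2 / L - t) * ‖f' a - f' b‖ ^ 2 := by
    have := sub_nonneg.2 ht
    positivity
  have hco' : 2 / L * ‖f' a - f' b‖ ^ 2 ≤ 2 * ⟪f' a - f' b, a - b⟫_ℝ := by
    rw [div_mul_eq_mul_div, mul_div_assoc]
    linarith
  nlinarith

end SmoothConvex

section Prox

variable {n : ℕ} {g : Euc n → EReal}

theorem ProperE.ne_top_of_forall_add_le (hg : ProperE g) {p : Euc n} {q : Euc n → ℝ}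
    (hmin : ∀ y, g p + (q p : EReal) ≤ g y + (q y : EReal)) : g p ≠ ⊤ := by
  obtain ⟨hbot, y, hy⟩ := hg
  intro htop
  have := hmin y
  rw [htop, EReal.top_add_coe, top_le_iff, ← EReal.coe_toReal hy (hbot y), ← EReal.coe_add] at this
  exact EReal.coe_ne_top _ this

theorem IsProx.inv_smul_sub_mem_subdiffE {P : ℝ → Euc n → Euc n} (hP : IsProx g P)
    (hg : ProperE g) (hconv : ConvexEReal g) {α : ℝ} (hα : 0 < α) (v : Euc n) :
    α⁻¹ • (v - P α v) ∈ SubdiffE g (P α v) := by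
  set p := P α v
  set c := 1 / (2 * α)
  have hmin := (hP α hα v p).1 rfl
  obtain ⟨a, hp⟩ : ∃ a : ℝ, g p = a :=
    ⟨_, (EReal.coe_toReal (hg.ne_top_of_forall_add_le (q := fun y => c * ‖v - y‖ ^ 2) hmin)
      (hg.1 p)).symm⟩
  intro z
  obtain hz | hz := eq_or_ne (g z) ⊤
  · simp [hz]
  obtain ⟨b, hz⟩ : ∃ b : ℝ, g z = b := ⟨_, (EReal.coe_toReal hz (hg.1 z)).symm⟩
  rw [hp, hz, ← EReal.coe_add, EReal.coe_le_coe_iff, real_inner_smul_left]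
  have hstep : ∀ t ∈ Ioc (0 : ℝ) 1, a + α⁻¹ * ⟪v - p, z - p⟫_ℝ ≤ b + t * (c * ‖z - p‖ ^ 2) := by
    rintro t ⟨ht₀, ht₁⟩
    have hconvt : g ((1 - t) • p + t • z) ≤ (((1 - t) * a + t * b : ℝ) : EReal) := by
      have := hconv p z (1 - t) t (by linarith) ht₀.le (by ring)
      rwa [hp, hz, ← EReal.coe_mul, ← EReal.coe_mul, ← EReal.coe_add] at this
    have hcompare := (hmin ((1 - t) • p + t • z)).trans (add_le_add hconvt le_rfl)
    rw [hp, ← EReal.coe_add, ← EReal.coe_add, EReal.coe_le_coe_iff] at hcompare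
    have hnorm : ‖v - ((1 - t) • p + t • z)‖ ^ 2
        = ‖v - p‖ ^ 2 - 2 * t * ⟪v - p, z - p⟫_ℝ + t ^ 2 * ‖z - p‖ ^ 2 := by
      rw [show v - ((1 - t) • p + t • z) = (v - p) - t • (z - p) by module, norm_sub_sq_real,
        real_inner_smul_right, norm_smul, Real.norm_of_nonneg ht₀.le]
      ring
    have hα' : α⁻¹ = 2 * c := by simp only [c]; field_simp
    rw [hnorm] at hcompare
    rw [hα', ← mul_le_mul_iff_right₀ ht₀]
    nlinarith
  have hlim : Tendsto (fun t : ℝ => b + t * (c * ‖z - p‖ ^ 2)) (𝓝[>] 0) (𝓝 b) := by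
    refine tendsto_nhdsWithin_of_tendsto_nhds ?_
    have hcont : Continuous fun t : ℝ => b + t * (c * ‖z - p‖ ^ 2) := by fun_prop
    simpa using hcont.tendsto 0
  exact ge_of_tendsto hlim (eventually_of_mem (Ioc_mem_nhdsGT zero_lt_one) hstep)

end Prox

theorem cdca_residual_eq {E : Type*} [AddCommGroup E] [Module ℝ E] (f' h' : E → E)
    {L lam mu : ℝ} (hL : L ≠ 0) (hmu : mu ≠ 0) (hkey : 1 - mu * lam = mu * L / 2) (y z p : E) :
    f' p + mu⁻¹ • ((1 - mu * lam) • y - mu • f' y + (mu * lam) • z + mu • h' z - p) - h' p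
      = (L / 2) • ((y - p) - (2 / L) • (f' y - f' p)) + lam • (z - p) + (h' z - h' p) := by
  match_scalars <;> field_simp
  · linear_combination 2 * hkey
  · linear_combination (-2) * hkey

theorem stmt10_general {n : ℕ}
    (f : Euc n → ℝ) (f' : Euc n → Euc n) (Lf : ℝ) (hLf : 0 < Lf)
    (hfconv : ConvexOn ℝ Set.univ f)
    (hfgrad : ∀ z, HasGradientAt f (f' z) z)
    (hflip : ∀ z w, ‖f' z - f' w‖ ≤ Lf * ‖z - w‖)
    (g : Euc n → EReal) (hgproper : ProperE g) (hgconv : ConvexEReal g)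
    (h : Euc n → ℝ)
    (P : ℝ → Euc n → Euc n) (hP : IsProx g P)
    (lam δ mu : ℝ) (hlam : 0 < lam)
    (hmu : mu = 2/(2*lam + Lf))
    (x : ℕ → Euc n) (hx : IsCDCA f' h P lam mu δ x)
    (h' : Euc n → Euc n) (hhgrad : ∀ z, HasGradientAt h (h' z) z)
    (Lh : ℝ) (hhlip : ∀ a ∈ convexHull ℝ (Set.range x), ∀ b ∈ convexHull ℝ (Set.range x),
      ‖h' a - h' b‖ ≤ Lh * ‖a - b‖) :
    ∀ k : ℕ, ∃ ξ ∈ SubdiffE g (x (k+2)),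
      ‖f' (x (k+2)) + ξ - h' (x (k+2))‖ ≤
        ((1 - mu*lam) * δ / mu) * ‖x (k+1) - x k‖ + (lam + Lh) * ‖x (k+2) - x (k+1)‖ := by
  intro k
  obtain ⟨η, hη, y, hstep, hy⟩ := hx k
  have hmu₀ : 0 < mu := by rw [hmu]; positivity
  have hkey : 1 - mu * lam = mu * Lf / 2 := by rw [hmu]; field_simp; ring
  have hξ := hP.inv_smul_sub_mem_subdiffE hgproper hgconv hmu₀
    ((1 - mu*lam) • y - mu • f' y + (mu*lam) • x (k+1) + mu • η)
  rw [← hstep] at hξ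
  refine ⟨_, hξ, ?_⟩
  have hmem : ∀ j, x j ∈ convexHull ℝ (range x) := fun j => subset_convexHull ℝ _ (mem_range_self j)
  rw [(hhgrad _).eq_of_forall_add_inner_le hη,
    cdca_residual_eq f' h' hLf.ne' hmu₀.ne' hkey, norm_sub_rev (x (k+1)) (x k)]
  calc _ ≤ Lf / 2 * (δ * ‖x k - x (k+1)‖) + lam * ‖x (k+2) - x (k+1)‖
        + Lh * ‖x (k+2) - x (k+1)‖ := by
        refine norm_add₃_le.trans (add_le_add_three ?_ ?_ ?_)
        · rw [norm_smul, Real.norm_of_nonneg (by positivity)]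
          gcongr
          refine (hfconv.norm_sub_smul_gradient_sub_le hLf hfgrad hflip (by positivity) le_rfl
            _ _).trans ?_
          rw [norm_sub_rev]
          exact hy
        · rw [norm_smul, Real.norm_of_nonneg hlam.le, norm_sub_rev]
        · rw [norm_sub_rev (x (k+2))]
          exact hhlip _ (hmem _) _ (hmem _)
    _ = _ := by rw [hkey]; field_simp; ring

/-- For a cDCA sequence, if `h` is differentiable with `∇h`
`L_h`-Lipschitz on the convex hull of `{xᵏ : k ≥ -1}`, then for every `k ≥ 0` there is
`ξ^{k+1} ∈ ∂g(x^{k+1})` such that `w^{k+1} = ∇f(x^{k+1}) + ξ^{k+1} - ∇h(x^{k+1})` satisfies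
`‖w^{k+1}‖ ≤ ((1-μλ)δ/μ)‖xᵏ - x^{k-1}‖ + (λ + L_h)‖x^{k+1} - xᵏ‖`.
(Here `x 0 = x⁻¹` and `x (k+1) = xᵏ`.) -/
theorem stmt10 {n : ℕ}
    (f : Euc n → ℝ) (f' : Euc n → Euc n) (Lf : ℝ) (hLf : 0 < Lf)
    (hfconv : ConvexOn ℝ Set.univ f)
    (hfgrad : ∀ z, HasGradientAt f (f' z) z)
    (hflip : ∀ z w, ‖f' z - f' w‖ ≤ Lf * ‖z - w‖)
    (g : Euc n → EReal) (hgproper : ProperE g) (hgconv : ConvexEReal g)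
    (hglsc : LowerSemicontinuous g)
    (h : Euc n → ℝ) (hhconv : ConvexOn ℝ Set.univ h)
    (P : ℝ → Euc n → Euc n) (hP : IsProx g P)
    (lam δ mu tau : ℝ) (hlam : 0 < lam) (hδ : δ ∈ Set.Ioo 0 (2*lam/Lf))
    (hmu : mu = 2/(2*lam + Lf)) (htau : tau = Lf^2 * δ^2 / (8*lam))
    (x : ℕ → Euc n) (hx : IsCDCA f' h P lam mu δ x)
    (h' : Euc n → Euc n) (hhgrad : ∀ z, HasGradientAt h (h' z) z)
    (Lh : ℝ) (hhlip : ∀ a ∈ convexHull ℝ (Set.range x), ∀ b ∈ convexHull ℝ (Set.range x),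
      ‖h' a - h' b‖ ≤ Lh * ‖a - b‖) :
    ∀ k : ℕ, ∃ ξ ∈ SubdiffE g (x (k+2)),
      ‖f' (x (k+2)) + ξ - h' (x (k+2))‖ ≤
        ((1 - mu*lam) * δ / mu) * ‖x (k+1) - x k‖ + (lam + Lh) * ‖x (k+2) - x (k+1)‖ :=
  stmt10_general f f' Lf hLf hfconv hfgrad hflip g hgproper hgconv h P hP lam δ mu hlam hmu x hx h'
    hhgrad Lh hhlip
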